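/- arXiv:1610.06430 — 3 statements merged into one kernel-verified Lean document; each statement's English description precedes it below -/
import Mathlib

section
/- There exists a constant C > 0 such that for every h with 0 < h ≤ 1/2, ∫_ℝ |f₁(z − h) − f₁(z)| dz ≥ C·h, where f₁(z) = 1/cosh(πz). -/
set_option maxHeartbeats 800000

noncomputable section

open Real MeasureTheory

/-- The density of the Lévy stochastic area at time 1: `f₁(z) = 1 / cosh(πz)`. -/
def levyDensity (z : ℝ) : ℝ := 1 / Real.cosh (π * z)

lemma levyDensity_integrable : Integrable levyDensity := by
  have h4 : Integrable (fun z : ℝ => 4 * (1 + z ^ 2)⁻¹) :=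
    (integrable_inv_one_add_sq).const_mul 4
  refine h4.mono ?_ ?_
  · -- AEStronglyMeasurable
    apply Continuous.aestronglyMeasurable
    exact continuous_const.div (Real.continuous_cosh.comp (continuous_const.mul continuous_id))
      (fun z => ne_of_gt (Real.cosh_pos _))
  · filter_upwards with z
    have hc : (1 + z ^ 2) / 4 ≤ Real.cosh (π * z) := by
      have h1 : Real.cosh (π * z) = Real.cosh (|π * z|) := (Real.cosh_abs _).symm
      have h2 : 1 + |π * z| + |π * z| ^ 2 / 2 ≤ Real.exp (|π * z|) :=
        Real.quadratic_le_exp_of_nonneg (abs_nonneg _)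
      have h3 : Real.exp (-|π * z|) > 0 := Real.exp_pos _
      have h5 : |π * z| ^ 2 = π ^ 2 * z ^ 2 := by rw [abs_mul]; rw [mul_pow]; simp [sq_abs]
      have hpi : (3 : ℝ) ≤ π := by linarith [Real.pi_gt_three]
      have hz : z ^ 2 ≤ π ^ 2 * z ^ 2 := by nlinarith [sq_nonneg z, sq_nonneg (π - 3), sq_nonneg (π * z), sq_nonneg ((π - 3) * z)]
      rw [h1, Real.cosh_eq]
      nlinarith [abs_nonneg (π * z), h3.le]
    have hcpos : (0:ℝ) < Real.cosh (π * z) := Real.cosh_pos _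
    have hq : (0:ℝ) < 1 + z ^ 2 := by positivity
    rw [Real.norm_eq_abs, Real.norm_eq_abs, levyDensity, abs_of_nonneg (by positivity),
      abs_of_nonneg (by positivity)]
    rw [div_le_iff₀ hcpos]
    have hinv : (1 + z ^ 2)⁻¹ * (1 + z ^ 2) = 1 := inv_mul_cancel₀ hq.ne'
    have hmul : (1 + z ^ 2)⁻¹ * ((1 + z ^ 2) / 4) ≤ (1 + z ^ 2)⁻¹ * Real.cosh (π * z) :=
      mul_le_mul_of_nonneg_left hc (by positivity)
    nlinarith

lemma levy_key {z h : ℝ} (hh : 0 < h) (hh2 : h ≤ 1 / 2) (hz1 : 1 ≤ z) (hz2 : z ≤ 2) :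
    π * Real.sinh (π / 2) / Real.cosh (2 * π) ^ 2 * h ≤
      levyDensity (z - h) - levyDensity z := by
  set a := π * z with ha
  set b := π * (z - h) with hb
  have hpi : (3 : ℝ) ≤ π := by linarith [Real.pi_gt_three]
  have hpi4 : π ≤ 4 := by linarith [Real.pi_lt_d2]
  have hd : a - b = π * h := by rw [ha, hb]; ring
  have hbge : π / 2 ≤ b := by rw [hb]; nlinarith
  have hage : π ≤ a := by rw [ha]; nlinarith
  have hale : a ≤ 2 * π := by rw [ha]; nlinarith
  have hble : b ≤ 2 * π := by rw [hb]; nlinarith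
  -- numerator bound : cosh a - cosh b ≥ (a - b) * sinh (π/2)
  have hnum : (a - b) * Real.sinh (π / 2) ≤ Real.cosh a - Real.cosh b := by
    have e1 : Real.exp b * (1 + (a - b)) ≤ Real.exp b * Real.exp (a - b) :=
      mul_le_mul_of_nonneg_left (by linarith [Real.add_one_le_exp (a - b)])
        (Real.exp_pos b).le
    have e1' : Real.exp b + Real.exp b * (a - b) ≤ Real.exp a := by
      rw [← Real.exp_add] at e1; rw [show b + (a - b) = a by ring] at e1; nlinarith
    have eb : Real.exp (π / 2) ≤ Real.exp b := Real.exp_le_exp.2 hbge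
    have e2 : Real.exp (π / 2) * (a - b) ≤ Real.exp a - Real.exp b := by
      have hab : 0 ≤ a - b := by nlinarith
      nlinarith
    -- exp(-b) - exp(-a) ≤ (a - b) * exp(-π/2)
    have e3 : Real.exp (-b) - Real.exp (-a) ≤ (a - b) * Real.exp (-(π / 2)) := by
      have : Real.exp (-b) - Real.exp (-a) = Real.exp (-a) * (Real.exp (a - b) - 1) := by
        rw [mul_sub, ← Real.exp_add, show -a + (a - b) = -b by ring]; ring
      rw [this]
      have hab : 0 ≤ a - b := by nlinarith
      have h6 : Real.exp (a - b) - 1 ≤ (a - b) * Real.exp (a - b) := by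
        have hm := mul_le_mul_of_nonneg_left (Real.add_one_le_exp (-(a - b)))
          (Real.exp_pos (a - b)).le
        have he : Real.exp (a - b) * Real.exp (-(a - b)) = 1 := by
          rw [← Real.exp_add]; simp
        nlinarith [hm, he]
      have h7 : Real.exp (-a) * ((a - b) * Real.exp (a - b)) = (a - b) * Real.exp (-b) := by
        have : Real.exp (-a) * Real.exp (a - b) = Real.exp (-b) := by
          rw [← Real.exp_add, show -a + (a - b) = -b by ring]
        nlinarith [this]
      have h8 : Real.exp (-b) ≤ Real.exp (-(π / 2)) := by
        apply Real.exp_le_exp.2; linarith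
      nlinarith [Real.exp_pos (-a)]
    rw [Real.cosh_eq, Real.cosh_eq, Real.sinh_eq]
    have key : Real.exp (π / 2) * (a - b) - (a - b) * Real.exp (-(π / 2))
        ≤ (Real.exp a - Real.exp b) - (Real.exp (-b) - Real.exp (-a)) := by linarith
    linarith [key]
  -- denominator bounds
  have hca : Real.cosh a ≤ Real.cosh (2 * π) := by
    rw [Real.cosh_le_cosh]; rw [abs_of_nonneg (by nlinarith), abs_of_nonneg (by nlinarith)]
    exact hale
  have hcb : Real.cosh b ≤ Real.cosh (2 * π) := by
    rw [Real.cosh_le_cosh]; rw [abs_of_nonneg (by nlinarith), abs_of_nonneg (by nlinarith)]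
    exact hble
  have hcap : (0:ℝ) < Real.cosh a := Real.cosh_pos _
  have hcbp : (0:ℝ) < Real.cosh b := Real.cosh_pos _
  have hs : (0:ℝ) < Real.sinh (π / 2) := Real.sinh_pos_iff.2 (by positivity)
  have hc2 : (0:ℝ) < Real.cosh (2 * π) := Real.cosh_pos _
  have hdiff : levyDensity (z - h) - levyDensity z
      = (Real.cosh a - Real.cosh b) / (Real.cosh a * Real.cosh b) := by
    rw [levyDensity, levyDensity, ← ha, ← hb]
    rw [one_div, one_div, inv_sub_inv hcbp.ne' hcap.ne', mul_comm (Real.cosh b)]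
  rw [hdiff, hd] at *
  rw [div_mul_eq_mul_div, div_le_div_iff₀ (by positivity) (by positivity)]
  have hnn : 0 ≤ π * h := by positivity
  calc π * Real.sinh (π / 2) * h * (Real.cosh a * Real.cosh b)
      ≤ π * Real.sinh (π / 2) * h * (Real.cosh (2 * π) * Real.cosh (2 * π)) := by
        apply mul_le_mul_of_nonneg_left _ (by positivity)
        exact mul_le_mul hca hcb hcbp.le hc2.le
    _ = (π * h * Real.sinh (π / 2)) * Real.cosh (2 * π) ^ 2 := by ring
    _ ≤ (Real.cosh a - Real.cosh b) * Real.cosh (2 * π) ^ 2 := by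
        apply mul_le_mul_of_nonneg_right _ (by positivity)
        calc π * h * Real.sinh (π / 2) = π * h * Real.sinh (π / 2) := rfl
          _ ≤ Real.cosh a - Real.cosh b := hnum

/-- Lower bound on the `L¹`-distance between the Lévy area density and its shift:
there is `C > 0` with `∫ |f₁(z − h) − f₁(z)| dz ≥ C h` for all `0 < h ≤ 1/2`. -/
theorem levy_density_shift_L1_lower :
    ∃ C : ℝ, 0 < C ∧
      ∀ h : ℝ, 0 < h → h ≤ 1 / 2 →
        C * h ≤ ∫ z : ℝ, |levyDensity (z - h) - levyDensity z| := by
  have hs : (0:ℝ) < Real.sinh (π / 2) := Real.sinh_pos_iff.2 (by positivity)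
  have hc2 : (0:ℝ) < Real.cosh (2 * π) := Real.cosh_pos _
  refine ⟨π * Real.sinh (π / 2) / Real.cosh (2 * π) ^ 2, by positivity, ?_⟩
  intro h hh hh2
  set C := π * Real.sinh (π / 2) / Real.cosh (2 * π) ^ 2 with hC
  have hint : Integrable levyDensity := levyDensity_integrable
  have hint2 : Integrable (fun z => levyDensity (z - h)) := hint.comp_sub_right h
  have hintd : Integrable (fun z => |levyDensity (z - h) - levyDensity z|) :=
    (hint2.sub hint).abs
  have step1 : C * h * (volume (Set.Icc (1:ℝ) 2)).toReal
      ≤ ∫ z in Set.Icc (1:ℝ) 2, |levyDensity (z - h) - levyDensity z| := by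
    apply setIntegral_ge_of_const_le_real measurableSet_Icc
    · simp
    · intro z hz
      have := levy_key hh hh2 hz.1 hz.2
      calc C * h ≤ levyDensity (z - h) - levyDensity z := this
        _ ≤ |levyDensity (z - h) - levyDensity z| := le_abs_self _
    · exact hintd.integrableOn
  have hvol : (volume (Set.Icc (1:ℝ) 2)).toReal = 1 := by
    rw [Real.volume_Icc]; norm_num
  rw [hvol, mul_one] at step1
  refine step1.trans ?_
  apply setIntegral_le_integral hintd
  filter_upwards with z using abs_nonneg _
end
end

section
/- Let t > 0 and b, b̃ ∈ ℝ, and let μ = N(b, t) and μ̃ = N(b̃, t) be the Gaussian measures on ℝ with means b, b̃ and common variance t. Then the total variation distance satisfies d_TV(μ, μ̃) = P(|Z| ≤ |b − b̃|/(2√t)), where Z is a standard Gaussian random variable; moreover, if b ≠ b̃ and t ≥ (b − b̃)², then d_TV(μ, μ̃) ≥ (1/√(2πe))·|b − b̃|/√t. -/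
noncomputable section

open Real MeasureTheory ProbabilityTheory

/-- The total variation distance between two measures on `ℝ`:
`sup { |μ(A) − ν(A)| : A measurable }`. -/
def tvDist (μ ν : Measure ℝ) : ℝ :=
  sSup {d : ℝ | ∃ A : Set ℝ, MeasurableSet A ∧ d = |(μ A).toReal - (ν A).toReal|}

open scoped NNReal ENNReal

lemma gauss_toReal (b : ℝ) {v : ℝ≥0} (hv : v ≠ 0) (A : Set ℝ) :
    ((gaussianReal b v) A).toReal = ∫ x in A, gaussianPDFReal b v x := by
  rw [gaussianReal_apply_eq_integral _ hv,
    ENNReal.toReal_ofReal (integral_nonneg fun x => gaussianPDFReal_nonneg _ _ _)]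

lemma pdf_le_pdf {b b' : ℝ} {v : ℝ≥0} (hv : v ≠ 0) {x : ℝ} (h : (x - b') ^ 2 ≤ (x - b) ^ 2) :
    gaussianPDFReal b v x ≤ gaussianPDFReal b' v x := by
  have hv' : (0:ℝ) < v := by positivity
  unfold gaussianPDFReal
  have h2 : (0:ℝ) < 2 * v := by linarith
  gcongr (√(2 * π * v))⁻¹ * rexp ?_
  exact (div_le_div_iff_of_pos_right h2).mpr (by linarith)

-- core inequality: sup attained at half line
lemma integral_le_halfline {b b' : ℝ} {v : ℝ≥0} (hv : v ≠ 0) (hbb : b' < b)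
    {A : Set ℝ} (hA : MeasurableSet A) :
    ∫ x in A, (gaussianPDFReal b v x - gaussianPDFReal b' v x) ≤
      ∫ x in Set.Ici ((b + b') / 2), (gaussianPDFReal b v x - gaussianPDFReal b' v x) := by
  set f := fun x => gaussianPDFReal b v x - gaussianPDFReal b' v x with hf
  set H := Set.Ici ((b + b') / 2) with hH
  have hint : Integrable f :=
    (integrable_gaussianPDFReal b v).sub (integrable_gaussianPDFReal b' v)
  have hposH : ∀ x ∈ H, 0 ≤ f x := by
    intro x hx
    have : (x - b) ^ 2 ≤ (x - b') ^ 2 := by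
      simp only [hH, Set.mem_Ici] at hx; nlinarith
    have := pdf_le_pdf (b := b') (b' := b) hv this
    simp [hf]; linarith
  have hnegHc : ∀ x ∈ A \ H, f x ≤ 0 := by
    intro x hx
    have hx' : x < (b + b') / 2 := by
      rcases hx with ⟨_, hx2⟩; simpa [hH] using hx2
    have : (x - b') ^ 2 ≤ (x - b) ^ 2 := by nlinarith
    have := pdf_le_pdf (b := b) (b' := b') hv this
    simp [hf]; linarith
  have hsplit := integral_inter_add_diff (μ := volume) (f := f) (s := A) (t := H)
    (measurableSet_Ici) hint.integrableOn
  have h1 : ∫ x in A ∩ H, f x ≤ ∫ x in H, f x := by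
    refine setIntegral_mono_set hint.integrableOn ?_ (Filter.Eventually.of_forall fun x hx => hx.2)
    · filter_upwards [ae_restrict_mem measurableSet_Ici] with x hx using hposH x hx
  have h2 : ∫ x in A \ H, f x ≤ 0 :=
    setIntegral_nonpos (hA.diff measurableSet_Ici) hnegHc
  linarith

lemma gauss_eq_map {t : ℝ} (ht : 0 < t) (b : ℝ) :
    gaussianReal b t.toNNReal = (gaussianReal 0 1).map (fun x => x * Real.sqrt t + b) := by
  have h1 : (gaussianReal 0 1).map (· * Real.sqrt t) = gaussianReal 0 t.toNNReal := by
    rw [gaussianReal_map_mul_const]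
    congr 1
    · exact mul_zero _
    · ext
      simp [Real.sq_sqrt ht.le, Real.coe_toNNReal _ ht.le]
  symm
  calc (gaussianReal 0 1).map (fun x => x * Real.sqrt t + b)
      = ((gaussianReal 0 1).map (· * Real.sqrt t)).map (· + b) := by
        rw [Measure.map_map (measurable_add_const b) (measurable_mul_const _)]
        rfl
    _ = (gaussianReal 0 t.toNNReal).map (· + b) := by rw [h1]
    _ = gaussianReal b t.toNNReal := by rw [gaussianReal_map_add_const b, zero_add]

lemma gauss_Ici {t : ℝ} (ht : 0 < t) (b c : ℝ) :
    (gaussianReal b t.toNNReal) (Set.Ici c) =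
      (gaussianReal 0 1) (Set.Ici ((c - b) / Real.sqrt t)) := by
  rw [gauss_eq_map ht b, Measure.map_apply (by fun_prop) measurableSet_Ici]
  congr 1
  ext x
  simp only [Set.mem_preimage, Set.mem_Ici]
  rw [div_le_iff₀ (Real.sqrt_pos.mpr ht)]
  constructor <;> intro <;> linarith

lemma gauss_value {t : ℝ} (ht : 0 < t) {b b' : ℝ} (hbb : b' < b) :
    ((gaussianReal b t.toNNReal) (Set.Ici ((b + b') / 2))).toReal -
      ((gaussianReal b' t.toNNReal) (Set.Ici ((b + b') / 2))).toReal =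
      ((gaussianReal 0 1) {z : ℝ | |z| ≤ (b - b') / (2 * Real.sqrt t)}).toReal := by
  set d := (b - b') / (2 * Real.sqrt t) with hd
  have hst : (0:ℝ) < Real.sqrt t := Real.sqrt_pos.mpr ht
  have hd0 : 0 < d := div_pos (by linarith) (by positivity)
  have e1 : ((b + b') / 2 - b) / Real.sqrt t = -d := by
    rw [hd]; field_simp; ring
  have e2 : ((b + b') / 2 - b') / Real.sqrt t = d := by
    rw [hd]; field_simp; ring
  rw [gauss_Ici ht b, gauss_Ici ht b', e1, e2]
  set N := gaussianReal 0 1 with hN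
  have hIcc : {z : ℝ | |z| ≤ d} = Set.Icc (-d) d := Set.ext fun x => by simp [abs_le, Set.mem_Icc]
  have hsets : Set.Ico (-d) d ∪ Set.Ici d = Set.Ici (-d) :=
    Set.Ico_union_Ici_eq_Ici (by linarith)
  have hdisj : Disjoint (Set.Ico (-d) d) (Set.Ici d) := by
    rw [Set.disjoint_left]
    rintro x ⟨_, h2⟩ h3
    exact absurd h3 (not_le.mpr h2)
  have hu : N (Set.Ici (-d)) = N (Set.Ico (-d) d) + N (Set.Ici d) := by
    rw [← hsets, measure_union hdisj measurableSet_Ici]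
  have hsing : N {d} = 0 :=
    gaussianReal_absolutelyContinuous 0 one_ne_zero (by simp)
  have hIccIco : N (Set.Icc (-d) d) = N (Set.Ico (-d) d) := by
    refine le_antisymm ?_ (measure_mono Set.Ico_subset_Icc_self)
    calc N (Set.Icc (-d) d) = N (Set.Ico (-d) d ∪ {d}) := by
          rw [Set.Ico_union_right (by linarith)]
      _ ≤ N (Set.Ico (-d) d) + N {d} := measure_union_le _ _
      _ = N (Set.Ico (-d) d) := by rw [hsing, add_zero]
  have hfin : ∀ s : Set ℝ, N s ≠ ⊤ := fun s => measure_ne_top N s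
  rw [hIcc, hIccIco]
  rw [hu, ENNReal.toReal_add (hfin _) (hfin _)]
  ring

lemma compl_toReal (P : Measure ℝ) [IsProbabilityMeasure P] {A : Set ℝ} (hA : MeasurableSet A) :
    (P Aᶜ).toReal = 1 - (P A).toReal := by
  rw [prob_compl_eq_one_sub hA, ENNReal.toReal_sub_of_le prob_le_one ENNReal.one_ne_top,
    ENNReal.toReal_one]

lemma tv_eq_aux {t : ℝ} (ht : 0 < t) {b b' : ℝ} (hbb : b' < b) :
    tvDist (gaussianReal b t.toNNReal) (gaussianReal b' t.toNNReal) =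
      ((gaussianReal 0 1) {z : ℝ | |z| ≤ (b - b') / (2 * Real.sqrt t)}).toReal := by
  have hv : t.toNNReal ≠ 0 := (Real.toNNReal_pos.mpr ht).ne'
  set μ := gaussianReal b t.toNNReal with hμ
  set ν := gaussianReal b' t.toNNReal with hν
  set D := ((gaussianReal 0 1) {z : ℝ | |z| ≤ (b - b') / (2 * Real.sqrt t)}).toReal with hD
  set H := Set.Ici ((b + b') / 2) with hH
  have hDval : (μ H).toReal - (ν H).toReal = D := gauss_value ht hbb
  have hD0 : 0 ≤ D := ENNReal.toReal_nonneg
  -- key bound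
  have key : ∀ A : Set ℝ, MeasurableSet A → (μ A).toReal - (ν A).toReal ≤ D := by
    intro A hA
    rw [hμ, hν, gauss_toReal b hv, gauss_toReal b' hv,
      ← integral_sub (integrable_gaussianPDFReal b _).integrableOn
        (integrable_gaussianPDFReal b' _).integrableOn]
    calc ∫ x in A, (gaussianPDFReal b t.toNNReal x - gaussianPDFReal b' t.toNNReal x)
        ≤ ∫ x in H, (gaussianPDFReal b t.toNNReal x - gaussianPDFReal b' t.toNNReal x) :=
          integral_le_halfline hv hbb hA
      _ = (μ H).toReal - (ν H).toReal := by
          rw [hμ, hν, gauss_toReal b hv, gauss_toReal b' hv,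
            integral_sub (integrable_gaussianPDFReal b _).integrableOn
              (integrable_gaussianPDFReal b' _).integrableOn]
      _ = D := hDval
  have habs : ∀ A : Set ℝ, MeasurableSet A → |(μ A).toReal - (ν A).toReal| ≤ D := by
    intro A hA
    rw [abs_sub_le_iff]
    refine ⟨key A hA, ?_⟩
    have h1 := key Aᶜ hA.compl
    rw [compl_toReal μ hA, compl_toReal ν hA] at h1
    linarith
  have hmem : D ∈ {d : ℝ | ∃ A : Set ℝ, MeasurableSet A ∧ d = |(μ A).toReal - (ν A).toReal|} := by
    refine ⟨H, measurableSet_Ici, ?_⟩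
    have h2 : |(μ H).toReal - (ν H).toReal| = (μ H).toReal - (ν H).toReal :=
      abs_of_nonneg (by rw [hDval]; exact hD0)
    rw [h2, hDval]
  refine IsGreatest.csSup_eq ⟨hmem, ?_⟩
  rintro x ⟨A, hA, rfl⟩
  exact habs A hA

lemma tvDist_comm (μ ν : Measure ℝ) : tvDist μ ν = tvDist ν μ := by
  unfold tvDist
  congr 1
  ext d
  constructor <;> rintro ⟨A, hA, rfl⟩ <;> exact ⟨A, hA, abs_sub_comm _ _⟩

lemma gauss_lower {c : ℝ} (hc0 : 0 ≤ c) (hc : c ≤ 1 / 2) :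
    (1 / Real.sqrt (2 * π * Real.exp 1)) * (2 * c) ≤
      ((gaussianReal 0 1) {z : ℝ | |z| ≤ c}).toReal := by
  have hIcc : {z : ℝ | |z| ≤ c} = Set.Icc (-c) c := Set.ext fun x => by simp [abs_le, Set.mem_Icc]
  rw [hIcc, gauss_toReal 0 one_ne_zero]
  set K := 1 / Real.sqrt (2 * π * Real.exp 1) with hK
  have hπ : (0:ℝ) < 2 * π := by positivity
  have pt : ∀ x ∈ Set.Icc (-c) c, K ≤ gaussianPDFReal 0 1 x := by
    intro x hx
    rcases hx with ⟨hx1, hx2⟩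
    have hx3 : x ^ 2 ≤ 1 := by nlinarith
    unfold gaussianPDFReal
    simp only [NNReal.coe_one, mul_one, sub_zero]
    have hKval : K = (Real.sqrt (2 * π))⁻¹ * Real.exp (-(1/2)) := by
      rw [hK, one_div, Real.sqrt_mul hπ.le, mul_inv, Real.exp_neg]
      congr 2
      rw [← Real.exp_half]
    rw [hKval]
    gcongr (Real.sqrt (2 * π))⁻¹ * Real.exp ?_
    rw [neg_div]
    linarith
  have hmeas : MeasurableSet (Set.Icc (-c) c) := measurableSet_Icc
  have hfin : volume (Set.Icc (-c) c) < ⊤ := by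
    rw [Real.volume_Icc]; exact ENNReal.ofReal_lt_top
  have hconst : ∫ _ in Set.Icc (-c) c, K = (2 * c) * K := by
    rw [setIntegral_const, measureReal_def, Real.volume_Icc, ENNReal.toReal_ofReal (by linarith), smul_eq_mul]
    ring_nf
  have hmono : ∫ _ in Set.Icc (-c) c, K ≤ ∫ x in Set.Icc (-c) c, gaussianPDFReal 0 1 x :=
    setIntegral_mono_on (integrableOn_const hfin.ne)
      (integrable_gaussianPDFReal 0 1).integrableOn hmeas pt
  calc K * (2 * c) = (2 * c) * K := by ring
    _ ≤ _ := hconst ▸ hmono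

/-- The total variation distance between two Gaussian measures on `ℝ` with means `b, b̃`
and common variance `t` equals `P(|Z| ≤ |b − b̃|/(2√t))` for a standard Gaussian `Z`;
moreover, if `b ≠ b̃` and `t ≥ (b − b̃)²`, it is at least
`(1/√(2πe)) · |b − b̃|/√t`. -/
theorem gaussian_total_variation (t : ℝ) (ht : 0 < t) (b b' : ℝ) :
    tvDist (gaussianReal b t.toNNReal) (gaussianReal b' t.toNNReal) =
      ((gaussianReal 0 1) {z : ℝ | |z| ≤ |b - b'| / (2 * Real.sqrt t)}).toReal ∧
    (b ≠ b' → (b - b') ^ 2 ≤ t →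
      (1 / Real.sqrt (2 * π * Real.exp 1)) * (|b - b'| / Real.sqrt t) ≤
        tvDist (gaussianReal b t.toNNReal) (gaussianReal b' t.toNNReal)) := by
  have hst : (0:ℝ) < Real.sqrt t := Real.sqrt_pos.mpr ht
  have hpart1 : tvDist (gaussianReal b t.toNNReal) (gaussianReal b' t.toNNReal) =
      ((gaussianReal 0 1) {z : ℝ | |z| ≤ |b - b'| / (2 * Real.sqrt t)}).toReal := by
    rcases lt_trichotomy b b' with h | h | h
    · rw [tvDist_comm, tv_eq_aux ht h, abs_sub_comm]
      rw [abs_of_pos (sub_pos.mpr h)]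
    · subst h
      have hS : {d : ℝ | ∃ A : Set ℝ, MeasurableSet A ∧
          d = |((gaussianReal b t.toNNReal) A).toReal -
            ((gaussianReal b t.toNNReal) A).toReal|} = {0} := by
        ext d
        simp only [Set.mem_setOf_eq, Set.mem_singleton_iff]
        constructor
        · rintro ⟨A, hA, rfl⟩; simp
        · rintro rfl; exact ⟨∅, MeasurableSet.empty, by simp⟩
      have hset : {z : ℝ | |z| ≤ |b - b| / (2 * Real.sqrt t)} = {0} := by
        ext z
        simp [abs_nonpos_iff]
      have hz : (gaussianReal 0 1) ({0} : Set ℝ) = 0 :=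
        gaussianReal_absolutelyContinuous 0 one_ne_zero (by simp)
      rw [tvDist, hS, csSup_singleton, hset, hz]
      simp
    · rw [tv_eq_aux ht h, abs_of_pos (sub_pos.mpr h)]
  refine ⟨hpart1, fun hne htt => ?_⟩
  set c := |b - b'| / (2 * Real.sqrt t) with hc
  have hc0 : 0 ≤ c := by positivity
  have habs : |b - b'| ≤ Real.sqrt t := by
    rw [← Real.sqrt_sq_eq_abs]
    exact Real.sqrt_le_sqrt htt
  have hchalf : c ≤ 1 / 2 := by
    rw [hc, div_le_div_iff₀ (by positivity) two_pos]
    linarith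
  have h2c : |b - b'| / Real.sqrt t = 2 * c := by
    rw [hc]; field_simp
  rw [h2c, hpart1]
  exact gauss_lower hc0 hchalf
end
end

section
/- Let (U_k)_{k ≥ 0} be a sequence of independent standard Gaussian random variables and for n ≥ 0 set Ψ_n = (4/π²)·Σ_{k=0}^{n} 4^{−k}·U_k². Then for every n ≥ 1, E[Ψ_n^{−1/2}] ≤ π·E[(U₀² + U₁²)^{−1/2}], and in particular sup_{n ≥ 1} E[Ψ_n^{−1/2}] < ∞. -/
noncomputable section

open Real MeasureTheory ProbabilityTheory
open Set

lemma aux_pdf_le (x : ℝ) : gaussianPDFReal 0 1 x ≤ (Real.sqrt (2 * π))⁻¹ := by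
  rw [gaussianPDFReal]
  have h1 : Real.exp (-(x - 0) ^ 2 / (2 * (1:NNReal))) ≤ 1 := by
    rw [Real.exp_le_one_iff]
    push_cast
    nlinarith [sq_nonneg x]
  have h2 : (0:ℝ) ≤ (Real.sqrt (2 * π * (1:NNReal)))⁻¹ := by positivity
  calc (Real.sqrt (2 * π * (1:NNReal)))⁻¹ * Real.exp (-(x - 0) ^ 2 / (2 * (1:NNReal)))
      ≤ (Real.sqrt (2 * π * (1:NNReal)))⁻¹ * 1 := by exact mul_le_mul_of_nonneg_left h1 h2
    _ = (Real.sqrt (2 * π))⁻¹ := by norm_num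

lemma aux_int_abs_rpow_Ioc :
    IntegrableOn (fun x : ℝ => |x| ^ (-(1/2) : ℝ)) (Ioc (-1 : ℝ) 1) := by
  have h1 : IntegrableOn (fun x : ℝ => |x| ^ (-(1/2) : ℝ)) (Ioc (0 : ℝ) 1) := by
    have := (intervalIntegral.intervalIntegrable_rpow' (a := 0) (b := 1) (r := -(1/2)) (by norm_num))
    rw [intervalIntegrable_iff_integrableOn_Ioc_of_le (by norm_num)] at this
    refine this.congr_fun (fun x hx => ?_) measurableSet_Ioc
    rw [abs_of_pos hx.1]
  have h2 : IntegrableOn (fun x : ℝ => |x| ^ (-(1/2) : ℝ)) (Ioc (-1 : ℝ) 0) := by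
    have h := (intervalIntegral.intervalIntegrable_rpow' (a := 0) (b := 1) (r := -(1/2)) (by norm_num))
    rw [IntervalIntegrable.iff_comp_neg] at h
    simp only [neg_zero] at h
    have h'' := h.symm
    rw [intervalIntegrable_iff_integrableOn_Ioc_of_le (by norm_num)] at h''
    refine h''.congr_fun (fun x hx => ?_) measurableSet_Ioc
    rw [abs_of_nonpos hx.2]
  have := h2.union h1
  rwa [Ioc_union_Ioc_eq_Ioc (by norm_num) (by norm_num)] at this

lemma aux_integrable_abs_rpow :
    Integrable (fun x : ℝ => |x| ^ (-(1/2) : ℝ)) (gaussianReal 0 1) := by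
  rw [gaussianReal_of_var_ne_zero 0 one_ne_zero,
    integrable_withDensity_iff (measurable_gaussianPDF 0 1)
      (Filter.Eventually.of_forall fun x => ENNReal.ofReal_lt_top)]
  have hmeas : AEStronglyMeasurable
      (fun x : ℝ => |x| ^ (-(1/2) : ℝ) * (gaussianPDF 0 1 x).toReal) volume := by
    refine (Measurable.aestronglyMeasurable ?_)
    exact (by measurability :
      Measurable (fun x : ℝ => |x| ^ (-(1/2) : ℝ) * (gaussianPDF 0 1 x).toReal))
  have hpdf_eq : ∀ x, (gaussianPDF 0 1 x).toReal = gaussianPDFReal 0 1 x := fun x =>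
    ENNReal.toReal_ofReal (gaussianPDFReal_nonneg 0 1 x)
  -- split into Ioc (-1) 1 and its complement
  rw [← integrableOn_univ, ← Set.union_compl_self (Ioc (-1:ℝ) 1)]
  refine IntegrableOn.union ?_ ?_
  · -- bounded pdf
    refine Integrable.mono' (aux_int_abs_rpow_Ioc.smul ((Real.sqrt (2*π))⁻¹))
      hmeas.restrict (Filter.Eventually.of_forall fun x => ?_)
    simp only [Pi.smul_apply, smul_eq_mul]
    rw [Real.norm_eq_abs, abs_of_nonneg (by positivity), hpdf_eq, mul_comm]
    exact mul_le_mul_of_nonneg_right (aux_pdf_le x) (by positivity)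
  · -- |x| ≥ 1 there
    refine Integrable.mono' (integrable_gaussianPDFReal 0 1).restrict
      hmeas.restrict ?_
    refine ae_restrict_of_forall_mem measurableSet_Ioc.compl fun x hx => ?_
    rw [Real.norm_eq_abs, abs_of_nonneg (by positivity), hpdf_eq]
    have h1 : (1:ℝ) ≤ |x| := by
      simp only [mem_compl_iff, mem_Ioc, not_and, not_le] at hx
      rcases le_or_gt x (-1) with h | h
      · rw [abs_of_nonpos (by linarith)]; linarith
      · have := hx h; rw [abs_of_pos (by linarith)]; linarith
    have h2 : |x| ^ (-(1/2) : ℝ) ≤ 1 := by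
      rw [← Real.rpow_zero |x|]
      exact Real.rpow_le_rpow_of_exponent_le h1 (by norm_num)
    nlinarith [gaussianPDFReal_nonneg 0 1 x]

lemma aux_gauss_zero : (gaussianReal 0 1) {(0:ℝ)} = 0 :=
  gaussianReal_absolutelyContinuous 0 one_ne_zero (Real.volume_singleton)

lemma aux_integrable_prod :
    Integrable (fun p : ℝ × ℝ => (Real.sqrt (p.1 ^ 2 + p.2 ^ 2))⁻¹)
      ((gaussianReal 0 1).prod (gaussianReal 0 1)) := by
  have hmeas : AEStronglyMeasurable (fun p : ℝ × ℝ => (Real.sqrt (p.1 ^ 2 + p.2 ^ 2))⁻¹)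
      ((gaussianReal 0 1).prod (gaussianReal 0 1)) := by
    exact (((continuous_fst.pow 2).add (continuous_snd.pow 2)).sqrt.measurable.inv
      ).aestronglyMeasurable
  have hprod := aux_integrable_abs_rpow.mul_prod aux_integrable_abs_rpow
  refine hprod.mono' hmeas ?_
  have h1 : ((gaussianReal 0 1).prod (gaussianReal 0 1)) {p : ℝ × ℝ | p.1 = 0} = 0 := by
    have : {p : ℝ × ℝ | p.1 = 0} = ({0} : Set ℝ) ×ˢ (univ : Set ℝ) := by
      ext ⟨x, y⟩; simp [eq_comm]
    rw [this, Measure.prod_prod, aux_gauss_zero, zero_mul]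
  have h2 : ((gaussianReal 0 1).prod (gaussianReal 0 1)) {p : ℝ × ℝ | p.2 = 0} = 0 := by
    have : {p : ℝ × ℝ | p.2 = 0} = (univ : Set ℝ) ×ˢ ({0} : Set ℝ) := by
      ext ⟨x, y⟩; simp [eq_comm]
    rw [this, Measure.prod_prod, aux_gauss_zero, mul_zero]
  have e1 : ∀ᵐ p : ℝ × ℝ ∂((gaussianReal 0 1).prod (gaussianReal 0 1)), p.1 ≠ 0 := by
    rw [ae_iff]; simpa using h1
  have e2 : ∀ᵐ p : ℝ × ℝ ∂((gaussianReal 0 1).prod (gaussianReal 0 1)), p.2 ≠ 0 := by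
    rw [ae_iff]; simpa using h2
  filter_upwards [e1, e2] with p hp1 hp2
  have hx : (0:ℝ) < |p.1| := abs_pos.mpr hp1
  have hy : (0:ℝ) < |p.2| := abs_pos.mpr hp2
  have key : Real.sqrt (|p.1| * |p.2|) ≤ Real.sqrt (p.1 ^ 2 + p.2 ^ 2) := by
    apply Real.sqrt_le_sqrt
    nlinarith [sq_abs p.1, sq_abs p.2, sq_nonneg (|p.1| - |p.2|)]
  have hpos : (0:ℝ) < Real.sqrt (|p.1| * |p.2|) := Real.sqrt_pos.mpr (by positivity)
  rw [Real.norm_eq_abs, abs_of_nonneg (by positivity)]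
  calc (Real.sqrt (p.1 ^ 2 + p.2 ^ 2))⁻¹ ≤ (Real.sqrt (|p.1| * |p.2|))⁻¹ :=
        inv_anti₀ hpos key
    _ = (|p.1| * |p.2|) ^ (-(1/2) : ℝ) := by
        rw [Real.rpow_neg (by positivity), Real.sqrt_eq_rpow]
    _ = |p.1| ^ (-(1/2) : ℝ) * |p.2| ^ (-(1/2) : ℝ) :=
        Real.mul_rpow hx.le hy.le

/-- For an i.i.d. standard Gaussian sequence `(U_k)` and
`Ψ_n = (4/π²) ∑_{k=0}^n 4^{-k} U_k²`, one has
`E[Ψ_n^{-1/2}] ≤ π E[(U₀² + U₁²)^{-1/2}]` for all `n ≥ 1`; in particular the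
moments `E[Ψ_n^{-1/2}]`, `n ≥ 1`, are uniformly bounded. -/
theorem psi_inv_sqrt_moment_bound
    {Ω : Type*} [MeasureSpace Ω] [IsProbabilityMeasure (volume : Measure Ω)]
    (U : ℕ → Ω → ℝ)
    (hmeas : ∀ k, Measurable (U k))
    (hindep : iIndepFun U volume)
    (hlaw : ∀ k, Measure.map (U k) volume = gaussianReal 0 1) :
    (∀ n : ℕ, 1 ≤ n →
      (∫ ω, (Real.sqrt ((4 / π ^ 2) *
          ∑ k ∈ Finset.range (n + 1), (1 / 4 : ℝ) ^ k * (U k ω) ^ 2))⁻¹) ≤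
        π * ∫ ω, (Real.sqrt ((U 0 ω) ^ 2 + (U 1 ω) ^ 2))⁻¹) ∧
    ∃ M : ℝ, ∀ n : ℕ, 1 ≤ n →
      (∫ ω, (Real.sqrt ((4 / π ^ 2) *
          ∑ k ∈ Finset.range (n + 1), (1 / 4 : ℝ) ^ k * (U k ω) ^ 2))⁻¹) ≤ M := by
  have hπ : (0:ℝ) < π := Real.pi_pos
  -- law of the pair
  have hI : IndepFun (U 0) (U 1) volume := hindep.indepFun (by norm_num : (0:ℕ) ≠ 1)
  have hpair : Measure.map (fun ω => (U 0 ω, U 1 ω)) volume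
      = (gaussianReal 0 1).prod (gaussianReal 0 1) := by
    rw [(indepFun_iff_map_prod_eq_prod_map_map (hmeas 0).aemeasurable
      (hmeas 1).aemeasurable).mp hI, hlaw 0, hlaw 1]
  -- integrability of the RHS integrand
  have hg_int : Integrable (fun ω => (Real.sqrt ((U 0 ω) ^ 2 + (U 1 ω) ^ 2))⁻¹) volume := by
    have h := aux_integrable_prod
    rw [← hpair] at h
    exact (integrable_map_measure h.aestronglyMeasurable
      ((hmeas 0).prodMk (hmeas 1)).aemeasurable).mp h
  -- a.e. U 0 ≠ 0
  have hU0 : ∀ᵐ ω, U 0 ω ≠ 0 := by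
    rw [ae_iff]
    have : {ω | ¬ U 0 ω ≠ 0} = U 0 ⁻¹' {0} := by ext ω; simp
    rw [this, ← Measure.map_apply (hmeas 0) (measurableSet_singleton 0), hlaw 0]
    exact aux_gauss_zero
  have main : ∀ n : ℕ, 1 ≤ n →
      (∫ ω, (Real.sqrt ((4 / π ^ 2) *
          ∑ k ∈ Finset.range (n + 1), (1 / 4 : ℝ) ^ k * (U k ω) ^ 2))⁻¹) ≤
        π * ∫ ω, (Real.sqrt ((U 0 ω) ^ 2 + (U 1 ω) ^ 2))⁻¹ := by
    intro n hn
    rw [← MeasureTheory.integral_const_mul]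
    refine integral_mono_of_nonneg
      (Filter.Eventually.of_forall fun ω => inv_nonneg.mpr (Real.sqrt_nonneg _))
      (hg_int.const_mul π) ?_
    filter_upwards [hU0] with ω hω
    set B := (U 0 ω) ^ 2 + (U 1 ω) ^ 2 with hBdef
    set S := ∑ k ∈ Finset.range (n + 1), (1 / 4 : ℝ) ^ k * (U k ω) ^ 2 with hSdef
    have hB : 0 < B := by
      have : 0 < (U 0 ω) ^ 2 := by positivity
      nlinarith [sq_nonneg (U 1 ω)]
    have hS : (1/4 : ℝ) * B ≤ S := by
      have hsub : ({0, 1} : Finset ℕ) ⊆ Finset.range (n + 1) := by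
        intro k hk
        fin_cases hk <;> simp <;> omega
      have h01 : ∑ k ∈ ({0, 1} : Finset ℕ), (1 / 4 : ℝ) ^ k * (U k ω) ^ 2 ≤ S :=
        Finset.sum_le_sum_of_subset_of_nonneg hsub (fun k _ _ => by positivity)
      rw [Finset.sum_insert (by norm_num), Finset.sum_singleton] at h01
      norm_num at h01
      nlinarith [sq_nonneg (U 0 ω)]
    have hA : (1/π^2) * B ≤ (4/π^2) * S := by
      have := mul_le_mul_of_nonneg_left hS (by positivity : (0:ℝ) ≤ 4/π^2)
      calc (1/π^2) * B = (4/π^2) * ((1/4) * B) := by ring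
        _ ≤ (4/π^2) * S := this
    have heq : Real.sqrt ((1/π^2) * B) = Real.sqrt B / π := by
      rw [Real.sqrt_mul (by positivity) B, one_div, Real.sqrt_inv,
        Real.sqrt_sq hπ.le]
      ring
    have h1 : Real.sqrt B / π ≤ Real.sqrt ((4/π^2) * S) :=
      heq ▸ Real.sqrt_le_sqrt hA
    have h2 : 0 < Real.sqrt B / π := by
      have := Real.sqrt_pos.mpr hB; positivity
    calc (Real.sqrt ((4/π^2) * S))⁻¹ ≤ (Real.sqrt B / π)⁻¹ := inv_anti₀ h2 h1
      _ = π * (Real.sqrt B)⁻¹ := by rw [inv_div, div_eq_mul_inv]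
  exact ⟨main, ⟨π * ∫ ω, (Real.sqrt ((U 0 ω) ^ 2 + (U 1 ω) ^ 2))⁻¹, main⟩⟩
end
end
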